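/- Let d ≥ 2 and let G be the grid graph on vertex set {1,…,d}^d, in which two vertices are adjacent if and only if they differ by exactly 1 in exactly one coordinate and agree in all others. Then for every A ⊆ {1,…,d}^d, the number of edges of G with exactly one endpoint in A is at least |A|·(d^d − |A|)/d^{d+1}. -/

import Mathlib

/-!
Canonical paths. For `u ∈ A` and `v ∉ A`, walk from `u` to `v` correcting the coordinates one
at a time, first to last; the walk leaves `A` along some edge `{x, y}` in direction `i`, where
`x ∈ A` agrees with `v` below `i` and with `u` above `i`. Hence an edge in direction `i` is
charged by at most `n ^ (i + 1) * n ^ (k - i) = n ^ (k + 1)` of the pairs `(u, v)`, so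
`|A| * (n ^ k - |A|) ≤ n ^ (k + 1) * |∂A|` on the grid `[n] ^ k`.
-/

open Filter Topology
open scoped Classical

noncomputable section

variable {V : Type*}

/-- Probability that the random subgraph `G(p)` lies in the event `A`. -/
noncomputable def percProb [Fintype V] [DecidableEq V] (G : SimpleGraph V) [DecidableRel G.Adj]
    (p : ℝ) (A : Set (Finset (Sym2 V))) : ℝ :=
  ∑ F ∈ G.edgeFinset.powerset,
    if F ∈ A then p ^ F.card * (1 - p) ^ (G.edgeFinset.card - F.card) else 0

/-- Number of vertices in the component of `v` in the spanning subgraph with edge set `F`. -/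
noncomputable def compCard [Fintype V] (F : Finset (Sym2 V)) (v : V) : ℕ :=
  Set.ncard {w | (SimpleGraph.fromEdgeSet (↑F : Set (Sym2 V))).Reachable v w}

/-- The ball of radius `r` around `w`. -/
def ball (G : SimpleGraph V) (w : V) (r : ℕ) : Set V :=
  {v | ∃ q : G.Walk w v, q.length ≤ r}

/-- The ball of radius `r` around a set `A`. -/
def setBall (G : SimpleGraph V) (A : Set V) (r : ℕ) : Set V :=
  {v | ∃ u ∈ A, ∃ q : G.Walk u v, q.length ≤ r}

/-- `G` is a vertex `b`-expander. -/
def VertexExpander [Fintype V] (G : SimpleGraph V) (b : ℝ) : Prop :=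
  ∀ A : Finset V, 0 < A.card → (A.card : ℝ) ≤ Fintype.card V / 2 →
    b * A.card ≤ (Set.ncard {v | v ∉ A ∧ ∃ u ∈ A, G.Adj u v} : ℝ)

/-- The set of edges of `G` with exactly one endpoint in `A`. -/
def edgeBoundary (G : SimpleGraph V) (A : Set V) : Set (Sym2 V) :=
  {e | e ∈ G.edgeSet ∧ ∃ u v : V, e = s(u, v) ∧ u ∈ A ∧ v ∉ A}

/-- `G` is an edge `b`-expander. -/
def EdgeExpander [Fintype V] (G : SimpleGraph V) (b : ℝ) : Prop :=
  ∀ A : Finset V, 0 < A.card → (A.card : ℝ) ≤ Fintype.card V / 2 →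
    b * A.card ≤ ((edgeBoundary G ↑A).ncard : ℝ)

/-- `e` is an `L`-bridge for configuration `F` (largeness threshold `c * |V|`). -/
def IsLBridge [Fintype V] (G : SimpleGraph V) (c : ℝ) (F : Finset (Sym2 V)) (e : Sym2 V) : Prop :=
  e ∈ G.edgeSet ∧ ∃ u v : V, e = s(u, v) ∧
    ¬ (SimpleGraph.fromEdgeSet (↑(F.erase e) : Set (Sym2 V))).Reachable u v ∧
    c * Fintype.card V ≤ (compCard (F.erase e) u : ℝ) ∧
    c * Fintype.card V ≤ (compCard (F.erase e) v : ℝ)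

/-- `F` has more than one component with at least `s` vertices. -/
def TwoLargeComponents [Fintype V] (F : Finset (Sym2 V)) (s : ℝ) : Prop :=
  ∃ v w : V, ¬ (SimpleGraph.fromEdgeSet (↑F : Set (Sym2 V))).Reachable v w ∧
    s ≤ (compCard F v : ℝ) ∧ s ≤ (compCard F w : ℝ)

/-- The edge-isoperimetric number (Cheeger constant) of `G`. -/
noncomputable def isoNumber [Fintype V] (G : SimpleGraph V) : ℝ :=
  sInf {x : ℝ | ∃ A : Finset V, 0 < A.card ∧ (A.card : ℝ) ≤ Fintype.card V / 2 ∧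
    x = ((edgeBoundary G ↑A).ncard : ℝ) / A.card}


/-- The grid graph on `{1, ..., d}^d`: two vertices are adjacent iff they differ by
exactly `1` in exactly one coordinate and agree in all others. -/
def gridGraph (d : ℕ) : SimpleGraph (Fin d → Fin d) where
  Adj u v := ∃ i, (((u i : ℕ) + 1 = (v i : ℕ)) ∨ ((v i : ℕ) + 1 = (u i : ℕ))) ∧
    ∀ j, j ≠ i → u j = v j
  symm := by
    refine ⟨?_⟩
    rintro u v ⟨i, h1, h2⟩
    exact ⟨i, h1.symm, fun j hj => (h2 j hj).symm⟩
  loopless := by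
    refine ⟨?_⟩
    rintro u ⟨i, h1, -⟩
    rcases h1 with h | h <;> omega

open Finset SimpleGraph Function

theorem SimpleGraph.Reachable.exists_adj_mem_of_notMem {G : SimpleGraph V} {a b : V}
    (h : G.Reachable a b) {S : Set V} (ha : a ∈ S) (hb : b ∉ S) :
    ∃ x y, G.Adj x y ∧ x ∈ S ∧ y ∉ S := by
  obtain ⟨p⟩ := h
  obtain ⟨e, -, hx, hy⟩ := p.exists_boundary_dart S ha hb
  exact ⟨_, _, e.adj, hx, hy⟩

theorem Finset.card_filter_eqOn_compl_le {ι α : Type*} [Fintype ι] [DecidableEq ι] [Fintype α]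
    (s : Finset ι) (g : ι → α) :
    #{f : ι → α | ∀ j ∉ s, f j = g j} ≤ Fintype.card α ^ #s := by
  calc _ ≤ #(univ : Finset (s → α)) := by
        refine card_le_card_of_injOn (fun f j => f j) (by simp) ?_
        intro f₁ hf₁ f₂ hf₂ h
        simp only [coe_filter, mem_univ, true_and, Set.mem_ofPred_eq] at hf₁ hf₂
        funext j
        by_cases hj : j ∈ s
        · exact congrFun h ⟨j, hj⟩
        · rw [hf₁ j hj, hf₂ j hj]
    _ = _ := by simp

/-- The grid `[n] ^ k`, the `k`-fold Cartesian power of the path on `n` vertices. -/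
def boxGrid (k n : ℕ) : SimpleGraph (Fin k → Fin n) where
  Adj u v := ∃ i, (pathGraph n).Adj (u i) (v i) ∧ ∀ j, j ≠ i → u j = v j
  symm := ⟨fun _ _ ⟨i, hi, h⟩ => ⟨i, hi.symm, fun j hj => (h j hj).symm⟩⟩
  loopless := ⟨fun _ ⟨_, hi, _⟩ => hi.ne rfl⟩

theorem gridGraph_eq_boxGrid (d : ℕ) : gridGraph d = boxGrid d d := by
  ext u v
  simp only [gridGraph, boxGrid, pathGraph_adj]

namespace boxGrid

variable {k n : ℕ}

theorem adj_update {x : Fin k → Fin n} {i : Fin k} {t : Fin n} (h : (pathGraph n).Adj (x i) t) :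
    (boxGrid k n).Adj x (update x i t) :=
  ⟨i, by rwa [update_self], fun _ hj => (update_of_ne hj _ _).symm⟩

theorem exists_crossing {A : Set (Fin k → Fin n)} {u v : Fin k → Fin n} (hu : u ∈ A)
    (hv : v ∉ A) :
    ∃ x i t, x ∈ A ∧ update x i t ∉ A ∧ (pathGraph n).Adj (x i) t ∧
      (∀ j, j < i → x j = v j) ∧ (∀ j, i < j → x j = u j) := by
  let p : ℕ → Fin k → Fin n := fun s j => if (j : ℕ) < s then v j else u j
  have hex : ∃ s, p s ∉ A := ⟨k, by simpa [p] using hv⟩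
  have hfind : Nat.find hex ≠ 0 := by
    rw [Ne, Nat.find_eq_zero]
    simpa [p] using hu
  obtain ⟨s, hs⟩ := Nat.exists_eq_succ_of_ne_zero hfind
  have hmem : p s ∈ A := not_not.1 (Nat.find_min hex (by omega))
  have hnot : p (s + 1) ∉ A := by simpa [hs] using Nat.find_spec hex
  have hsk : s < k := by have := Nat.find_min' hex (m := k) (by simpa [p] using hv); omega
  set i : Fin k := ⟨s, hsk⟩
  have hpi : p s i = u i := by simp [p, i]
  have hstep : p (s + 1) = update (p s) i (v i) := by
    funext j
    by_cases hj : j = i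
    · subst hj; simp [p, i]
    · rw [update_of_ne hj]
      have : (j : ℕ) ≠ s := fun h => hj (Fin.ext h)
      simp only [p]
      split_ifs <;> first | rfl | omega
  obtain ⟨t, t', hadj, ht, ht'⟩ :=
    (pathGraph_preconnected n (u i) (v i)).exists_adj_mem_of_notMem
      (S := {t | update (p s) i t ∈ A}) (by simpa [← hpi] using hmem)
      (by simpa [hstep] using hnot)
  refine ⟨update (p s) i t, i, t', ht, by simpa using ht', by simpa using hadj, ?_, ?_⟩
  · intro j hj
    rw [update_of_ne hj.ne]
    simp [p, show (j : ℕ) < s from hj]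
  · intro j hj
    rw [update_of_ne hj.ne']
    simp [p, show ¬ (j : ℕ) < s from not_lt.2 (le_of_lt hj)]

/-- `(x, i, t)` encodes the step from `x` to `update x i t`; the steps leaving `A` correspond
bijectively to the boundary edges of `A`. -/
def exitSteps (A : Finset (Fin k → Fin n)) : Finset ((Fin k → Fin n) × Fin k × Fin n) :=
  {z | z.1 ∈ A ∧ update z.1 z.2.1 z.2.2 ∉ A ∧ (pathGraph n).Adj (z.1 z.2.1) z.2.2}

theorem card_exitSteps_le (A : Finset (Fin k → Fin n)) :
    #(exitSteps A) ≤ (edgeBoundary (boxGrid k n) ↑A).ncard := by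
  rw [← Set.ncard_coe_finset]
  refine Set.ncard_le_ncard_of_injOn (fun z => s(z.1, update z.1 z.2.1 z.2.2)) ?_ ?_
    (Set.toFinite _)
  · rintro ⟨x, i, t⟩ hz
    simp only [exitSteps, coe_filter, mem_univ, true_and, Set.mem_ofPred_eq] at hz
    exact ⟨adj_update hz.2.2, x, _, rfl, hz.1, hz.2.1⟩
  · rintro ⟨x, i, t⟩ hz ⟨x', i', t'⟩ hz' h
    simp only [exitSteps, coe_filter, mem_univ, true_and, Set.mem_ofPred_eq] at hz hz'
    obtain ⟨rfl, hy⟩ | ⟨rfl, -⟩ := Sym2.eq_iff.1 h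
    · have hi : i = i' := by
        by_contra hne
        have := congrFun hy i
        rw [update_self, update_of_ne hne] at this
        exact hz.2.2.ne this.symm
      subst hi
      simpa using congrFun hy i
    · exact absurd hz.1 hz'.2.1

/-- The pairs `(u, v)` whose canonical path could leave `A` at `x` in direction `i`. -/
def routedPairs (x : Fin k → Fin n) (i : Fin k) :
    Finset ((Fin k → Fin n) × (Fin k → Fin n)) :=
  ({u | ∀ j, i < j → u j = x j} : Finset _) ×ˢ ({v | ∀ j, j < i → v j = x j} : Finset _)

theorem card_routedPairs_le (x : Fin k → Fin n) (i : Fin k) :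
    #(routedPairs x i) ≤ n ^ (k + 1) := by
  have hu := card_filter_eqOn_compl_le (Iic i) x
  have hv := card_filter_eqOn_compl_le (Ici i) x
  simp only [mem_Iic, mem_Ici, not_le, Fintype.card_fin, Fin.card_Iic, Fin.card_Ici] at hu hv
  calc _ ≤ n ^ (i + 1 : ℕ) * n ^ (k - i) := by
        rw [routedPairs, card_product]
        exact Nat.mul_le_mul hu hv
    _ = n ^ (k + 1) := by rw [← pow_add]; congr 1; omega

theorem card_mul_card_compl_le (A : Finset (Fin k → Fin n)) :
    #A * #Aᶜ ≤ n ^ (k + 1) * #(exitSteps A) := by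
  have hcover : A ×ˢ Aᶜ ⊆ (exitSteps A).biUnion fun z => routedPairs z.1 z.2.1 := by
    rintro ⟨u, v⟩ huv
    rw [mem_product, mem_compl] at huv
    obtain ⟨x, i, t, hx, hy, hadj, hbelow, habove⟩ :=
      exists_crossing (mem_coe.2 huv.1) (mt mem_coe.1 huv.2)
    refine mem_biUnion.2 ⟨(x, i, t), ?_, ?_⟩
    · simpa [exitSteps] using ⟨hx, hy, hadj⟩
    · simp only [routedPairs, mem_product, mem_filter, mem_univ, true_and]
      exact ⟨fun j hj => (habove j hj).symm, fun j hj => (hbelow j hj).symm⟩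
  calc #A * #Aᶜ = #(A ×ˢ Aᶜ) := (card_product _ _).symm
    _ ≤ ∑ z ∈ exitSteps A, #(routedPairs z.1 z.2.1) :=
      (card_le_card hcover).trans card_biUnion_le
    _ ≤ ∑ _z ∈ exitSteps A, n ^ (k + 1) := sum_le_sum fun z _ => card_routedPairs_le z.1 z.2.1
    _ = n ^ (k + 1) * #(exitSteps A) := by rw [sum_const, smul_eq_mul, mul_comm]

theorem card_mul_sub_card_le (A : Finset (Fin k → Fin n)) :
    (#A : ℝ) * (n ^ k - #A) ≤ (edgeBoundary (boxGrid k n) ↑A).ncard * n ^ (k + 1) := by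
  have hA : #A ≤ n ^ k := by simpa using card_le_univ A
  have hAc : #Aᶜ = n ^ k - #A := by simp [card_compl]
  calc (#A : ℝ) * (n ^ k - #A) = ((#A * #Aᶜ : ℕ) : ℝ) := by rw [hAc]; push_cast [hA]; ring
    _ ≤ ((n ^ (k + 1) * #(exitSteps A) : ℕ) : ℝ) := by exact_mod_cast card_mul_card_compl_le A
    _ ≤ _ := by
      push_cast
      rw [mul_comm]
      gcongr
      exact_mod_cast card_exitSteps_le A

end boxGrid

theorem grid_edge_isoperimetry_general_general
    (d : ℕ) (A : Finset (Fin d → Fin d)) :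
    (A.card : ℝ) * ((d : ℝ) ^ d - A.card) / (d : ℝ) ^ (d + 1)
      ≤ ((edgeBoundary (gridGraph d) ↑A).ncard : ℝ) := by
  rw [gridGraph_eq_boxGrid]
  exact div_le_of_le_mul₀ (by positivity) (by positivity) (boxGrid.card_mul_sub_card_le A)

theorem grid_edge_isoperimetry_general
    (d : ℕ) (hd : 2 ≤ d) (A : Finset (Fin d → Fin d)) :
    (A.card : ℝ) * ((d : ℝ) ^ d - A.card) / (d : ℝ) ^ (d + 1)
      ≤ ((edgeBoundary (gridGraph d) ↑A).ncard : ℝ) :=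
  grid_edge_isoperimetry_general_general d A

end
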